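/- Let h : X × X* → ℝ∪{+∞} be a convex lower semicontinuous function with h(x,x*) ≥ ⟨x,x*⟩ for all (x,x*) ∈ X × X* and h*(x*,x**) ≥ ⟨x*,x**⟩ for all (x*,x**) ∈ X* × X**. Then for every (x₀,x₀*) ∈ X × X*, inf_{(x,x*)∈X×X*} ( h_{(x₀,x₀*)}(x,x*) + ½‖x‖² + ½‖x*‖² ) = 0. -/

import Mathlib

noncomputable section

open NormedSpace

/-- The translate `h_{(x₀,x₀*)}` of a function on `X × X*`. -/
def transl {X : Type*} [NormedAddCommGroup X] [NormedSpace ℝ X]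
    (h : X × (X →L[ℝ] ℝ) → EReal) (w : X × (X →L[ℝ] ℝ)) :
    X × (X →L[ℝ] ℝ) → EReal :=
  fun p => h (p.1 + w.1, p.2 + w.2) - ((w.2 p.1 + p.2 w.1 + w.2 w.1 : ℝ) : EReal)

/-- The translate of a function on `X* × X**`. -/
def translD {X : Type*} [NormedAddCommGroup X] [NormedSpace ℝ X]
    (g : (X →L[ℝ] ℝ) × ((X →L[ℝ] ℝ) →L[ℝ] ℝ) → EReal)
    (v : (X →L[ℝ] ℝ) × ((X →L[ℝ] ℝ) →L[ℝ] ℝ)) :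
    (X →L[ℝ] ℝ) × ((X →L[ℝ] ℝ) →L[ℝ] ℝ) → EReal :=
  fun q => g (q.1 + v.1, q.2 + v.2) - ((v.2 q.1 + q.2 v.1 + v.2 v.1 : ℝ) : EReal)

/-- The conjugate `h* : X* × X** → ℝ ∪ {±∞}`,
`h*(x*,x**) = sup_{(y,y*)} ⟨y,x*⟩ + ⟨y*,x**⟩ − h(y,y*)`. -/
def conj {X : Type*} [NormedAddCommGroup X] [NormedSpace ℝ X]
    (h : X × (X →L[ℝ] ℝ) → EReal) :
    (X →L[ℝ] ℝ) × ((X →L[ℝ] ℝ) →L[ℝ] ℝ) → EReal :=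
  fun q => ⨆ p : X × (X →L[ℝ] ℝ), (((q.1 p.1 + q.2 p.2 : ℝ) : EReal) - h p)

/-- Convexity of an `EReal`-valued function. -/
def ConvexE {X : Type*} [NormedAddCommGroup X] [NormedSpace ℝ X]
    (h : X × (X →L[ℝ] ℝ) → EReal) : Prop :=
  ∀ p q : X × (X →L[ℝ] ℝ), ∀ a b : ℝ, 0 ≤ a → 0 ≤ b → a + b = 1 →
    h (a • p + b • q) ≤ (a : EReal) * h p + (b : EReal) * h q

/-- The auxiliary condition:
`inf_{(x,x*)} h_{(x₀,x₀*)}(x,x*) + ½‖x‖² + ½‖x*‖² = 0` for all `(x₀,x₀*)`. -/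
def AuxCond {X : Type*} [NormedAddCommGroup X] [NormedSpace ℝ X]
    (h : X × (X →L[ℝ] ℝ) → EReal) : Prop :=
  ∀ w : X × (X →L[ℝ] ℝ),
    (⨅ p : X × (X →L[ℝ] ℝ),
      (transl h w p + ((‖p.1‖ ^ 2 / 2 + ‖p.2‖ ^ 2 / 2 : ℝ) : EReal))) = 0

/-- Monotone operator (identified with its graph). -/
def MonotoneSet {X : Type*} [NormedAddCommGroup X] [NormedSpace ℝ X]
    (T : Set (X × (X →L[ℝ] ℝ))) : Prop :=
  ∀ p ∈ T, ∀ q ∈ T, 0 ≤ (p.2 - q.2) (p.1 - q.1)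

/-- Maximal monotone operator. -/
def MaximalMonotone {X : Type*} [NormedAddCommGroup X] [NormedSpace ℝ X]
    (T : Set (X × (X →L[ℝ] ℝ))) : Prop :=
  MonotoneSet T ∧ ∀ S : Set (X × (X →L[ℝ] ℝ)), MonotoneSet S → T ⊆ S → S = T

/-- The Fitzpatrick family of `T`. -/
def FitzFamily {X : Type*} [NormedAddCommGroup X] [NormedSpace ℝ X]
    (T : Set (X × (X →L[ℝ] ℝ))) : Set (X × (X →L[ℝ] ℝ) → EReal) :=
  {h | ConvexE h ∧ LowerSemicontinuous h ∧
      (∀ p : X × (X →L[ℝ] ℝ), (p.2 p.1 : EReal) ≤ h p) ∧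
      ∀ p ∈ T, h p = (p.2 p.1 : EReal)}

/-- `T` is of type (NI): `inf_{(y,y*)∈T} ⟨x*−y*, x**−Jy⟩ ≤ 0` for all `(x*,x**)`. -/
def TypeNI {X : Type*} [NormedAddCommGroup X] [NormedSpace ℝ X]
    (T : Set (X × (X →L[ℝ] ℝ))) : Prop :=
  ∀ q : (X →L[ℝ] ℝ) × ((X →L[ℝ] ℝ) →L[ℝ] ℝ),
    (⨅ p : T, (((q.2 - inclusionInDoubleDual ℝ X p.1.1) (q.1 - p.1.2) : ℝ) : EReal)) ≤ 0

/-!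
Translation by `(x₀, x₀*)` preserves convexity of the epigraph and both inequalities
`h ≥ ⟨·,·⟩`, `h* ≥ ⟨·,·⟩`, because `(h_{(x₀,x₀*)})* = (h*)_{(x₀*, Jx₀)}`; so it suffices to
treat `(x₀, x₀*) = 0`. The infimum is then `≥ 0` since `⟨x,x*⟩ + ½‖x‖² + ½‖x*‖² ≥ 0`.
If it were `≥ l > 0`, separating the epigraph of `h` from the open convex set
`{(p, t) | t + ½‖p.1‖² + ½‖p.2‖² < l}` gives `(q₁, q₂) ∈ X* × X**` and `c` with
`h*(-q₁, -q₂) ≤ c` and `q₁ x + q₂ x* - ½‖x‖² - ½‖x*‖² + l ≤ -c`. Taking `x* = -q₁` and using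
`q₂ q₁ ≤ h*(-q₁, -q₂) ≤ c` leaves `q₁ x - ½‖x‖² ≤ ½‖q₁‖² - l` for all `x`, whereas the
supremum of the left side is `½‖q₁‖²`.
-/

open Set

namespace EReal

lemma coe_sub_le_of_forall_le {x : EReal} {a c : ℝ} (h : ∀ t : ℝ, x ≤ t → a - t ≤ c) :
    (a : EReal) - x ≤ c := by
  induction x with
  | bot => linarith [h (a - c - 1) bot_le]
  | coe t => exact_mod_cast h t le_rfl
  | top => simp

lemma coe_sub_sub_coe (a b : ℝ) (x : EReal) :
    (a : EReal) - (x - b) = ((a + b : ℝ) : EReal) - x := by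
  induction x with
  | bot => simp
  | coe t => norm_cast; ring
  | top => simp

lemma coe_sub_sub_comm (a b : ℝ) (x : EReal) :
    ((a - b : ℝ) : EReal) - x = (a - x) - b := by
  rw [coe_sub]
  exact add_right_comm (a : EReal) (-b) (-x)

lemma iSup_sub_coe {ι : Sort*} (f : ι → EReal) (b : ℝ) :
    ⨆ i, (f i - b) = (⨆ i, f i) - b := by
  refine le_antisymm (iSup_le fun i => sub_le_sub (le_iSup f i) le_rfl) ?_
  rw [sub_le_iff_le_add (.inl (coe_ne_bot b)) (.inl (coe_ne_top b))]
  refine iSup_le fun i => ?_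
  simpa only [sub_add_cancel] using add_le_add_left (le_iSup (fun i => f i - b) i) (b : EReal)

end EReal

namespace ContinuousLinearMap

variable {E : Type*} [SeminormedAddCommGroup E] [NormedSpace ℝ E]

lemma neg_apply_le_half_sq_norm_add (ψ : E →L[ℝ] ℝ) (x : E) :
    -ψ x ≤ ‖x‖ ^ 2 / 2 + ‖ψ‖ ^ 2 / 2 := by
  have := ψ.le_opNorm x
  rw [Real.norm_eq_abs] at this
  nlinarith [neg_abs_le (ψ x), sq_nonneg (‖x‖ - ‖ψ‖), norm_nonneg x, norm_nonneg ψ]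

lemma sq_apply_le_of_forall_apply_sub_le (ψ : E →L[ℝ] ℝ) {c : ℝ}
    (h : ∀ x, ψ x - ‖x‖ ^ 2 / 2 ≤ c) (x : E) : ψ x ^ 2 ≤ 2 * c * ‖x‖ ^ 2 := by
  rcases (norm_nonneg x).eq_or_lt with hx | hx
  · have : ψ x = 0 := by
      simpa [← hx] using ψ.le_opNorm x
    simp [this, ← hx]
  · have key := h ((ψ x / ‖x‖ ^ 2) • x)
    have hn : 0 < ‖x‖ ^ 2 := by positivity
    rw [map_smul, smul_eq_mul, norm_smul, Real.norm_eq_abs, mul_pow, sq_abs] at key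
    have e : ψ x / ‖x‖ ^ 2 * ψ x - (ψ x / ‖x‖ ^ 2) ^ 2 * ‖x‖ ^ 2 / 2
        = ψ x ^ 2 / (2 * ‖x‖ ^ 2) := by field_simp; ring
    rw [e, div_le_iff₀ (by positivity)] at key
    linarith

lemma half_sq_opNorm_le_of_forall_apply_sub_le (ψ : E →L[ℝ] ℝ) {c : ℝ}
    (h : ∀ x, ψ x - ‖x‖ ^ 2 / 2 ≤ c) : ‖ψ‖ ^ 2 / 2 ≤ c := by
  have hc : 0 ≤ 2 * c := by linarith [h 0, show ψ 0 - ‖(0 : E)‖ ^ 2 / 2 = 0 by simp]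
  have hψ : ‖ψ‖ ≤ √(2 * c) := ψ.opNorm_le_bound (Real.sqrt_nonneg _) fun x => by
    rw [Real.norm_eq_abs, ← Real.sqrt_sq (norm_nonneg x), ← Real.sqrt_mul hc]
    exact Real.abs_le_sqrt (ψ.sq_apply_le_of_forall_apply_sub_le h x)
  nlinarith [pow_le_pow_left₀ (norm_nonneg ψ) hψ 2, Real.sq_sqrt hc]

end ContinuousLinearMap

theorem convexOn_univ_half_sq_norm {E : Type*} [SeminormedAddCommGroup E] [NormedSpace ℝ E] :
    ConvexOn ℝ univ fun x : E => ‖x‖ ^ 2 / 2 := by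
  simpa [div_eq_inv_mul] using
    (convexOn_univ_norm.pow (fun x _ => norm_nonneg x) 2).smul (by norm_num : (0 : ℝ) ≤ 2⁻¹)

theorem convexOn_univ_half_sq_norm_add {E F : Type*} [SeminormedAddCommGroup E]
    [NormedSpace ℝ E] [SeminormedAddCommGroup F] [NormedSpace ℝ F] :
    ConvexOn ℝ univ fun p : E × F => ‖p.1‖ ^ 2 / 2 + ‖p.2‖ ^ 2 / 2 :=
  (convexOn_univ_half_sq_norm.comp_linearMap (LinearMap.fst ℝ E F)).add
    (convexOn_univ_half_sq_norm.comp_linearMap (LinearMap.snd ℝ E F))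

theorem exists_separating_functional_of_le_add {E : Type*} [NormedAddCommGroup E]
    [NormedSpace ℝ E] {A : Set (E × ℝ)} (hA : Convex ℝ A) (hAne : A.Nonempty) {N : E → ℝ}
    (hN : ConvexOn ℝ univ N) (hNc : Continuous N) {l : ℝ} (hl : ∀ e ∈ A, l ≤ e.2 + N e.1) :
    ∃ (r : E →L[ℝ] ℝ) (c : ℝ), (∀ e ∈ A, -r e.1 - e.2 ≤ c) ∧ ∀ x, r x - N x + l ≤ -c := by
  let B : Set (E × ℝ) := {e | e.2 + N e.1 < l}
  have hB : Convex ℝ B := by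
    simpa using ((LinearMap.snd ℝ E ℝ).convexOn convex_univ).add
      (hN.comp_linearMap (LinearMap.fst ℝ E ℝ)) |>.convex_lt l
  have hBopen : IsOpen B := isOpen_lt (by fun_prop) continuous_const
  have hdisj : Disjoint B A := disjoint_left.2 fun e heB heA => (hl e heA).not_gt heB
  obtain ⟨f, u, hfB, hfA⟩ := geometric_hahn_banach_open hB hBopen hA hdisj
  set s := f (0, 1)
  set g := f.comp (ContinuousLinearMap.inl ℝ E ℝ)
  have hf : ∀ e : E × ℝ, f e = g e.1 + e.2 * s := fun e => by
    rw [← f.comp_inl_add_comp_inr e]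
    congr 1
    rw [ContinuousLinearMap.comp_apply, ContinuousLinearMap.inr_apply,
      show ((0 : E), e.2) = e.2 • ((0 : E), (1 : ℝ)) by simp, map_smul, smul_eq_mul]
  obtain ⟨⟨x₀, t₀⟩, he₀⟩ := hAne
  -- if `s ≤ 0`, moving down from `(x₀, t₀) ∈ A` into `B` would not decrease `f`
  have hs : 0 < s := by
    by_contra! hs
    let t := min t₀ (l - N x₀ - 1)
    have h₁ := hfB (x₀, t) (show t + N x₀ < l by linarith [min_le_right t₀ (l - N x₀ - 1)])
    have h₂ := hfA _ he₀
    rw [hf] at h₁ h₂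
    nlinarith [min_le_left t₀ (l - N x₀ - 1)]
  refine ⟨s⁻¹ • g, -u / s, fun e he => ?_, fun x => ?_⟩
  · have key : -(s⁻¹ • g) e.1 - e.2 = -(g e.1 + e.2 * s) / s := by
      simp only [smul_apply, smul_eq_mul]
      field_simp
      ring
    rw [key]
    exact div_le_div_of_nonneg_right (neg_le_neg (hf e ▸ hfA e he)) hs.le
  · have hx : g x + (l - N x) * s ≤ u := le_of_forall_pos_lt_add fun ε hε => by
      have := hfB (x, l - N x - ε / s) (show _ < l by linarith [div_pos hε hs])
      rw [hf, sub_mul, div_mul_cancel₀ _ hs.ne'] at this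
      linarith
    have key : (s⁻¹ • g) x - N x + l = (g x + (l - N x) * s) / s := by
      simp only [smul_apply, smul_eq_mul]
      field_simp
      ring
    rw [key, neg_div, neg_neg]
    exact div_le_div_of_nonneg_right hx hs.le

section Translation

variable {X : Type*} [NormedAddCommGroup X] [NormedSpace ℝ X]

theorem le_transl {h : X × (X →L[ℝ] ℝ) → EReal}
    (hpi : ∀ p : X × (X →L[ℝ] ℝ), (p.2 p.1 : EReal) ≤ h p) (w : X × (X →L[ℝ] ℝ))
    (p : X × (X →L[ℝ] ℝ)) : (p.2 p.1 : EReal) ≤ transl h w p := by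
  have hsplit : p.2 p.1 = (p.2 + w.2) (p.1 + w.1) - (w.2 p.1 + p.2 w.1 + w.2 w.1) := by
    simp only [add_apply, map_add]
    ring
  rw [hsplit, EReal.coe_sub]
  exact EReal.sub_le_sub (hpi (p + w)) le_rfl

theorem transl_le_iff (h : X × (X →L[ℝ] ℝ) → EReal) (w p : X × (X →L[ℝ] ℝ)) (t : ℝ) :
    transl h w p ≤ t ↔ h (p + w) ≤ ((t + (w.2 p.1 + p.2 w.1 + w.2 w.1) : ℝ) : EReal) := by
  rw [transl, EReal.sub_le_iff_le_add (.inl (EReal.coe_ne_bot _)) (.inl (EReal.coe_ne_top _)),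
    ← EReal.coe_add]
  rfl

theorem convex_epigraph_transl {h : X × (X →L[ℝ] ℝ) → EReal}
    (hh : Convex ℝ {e : (X × (X →L[ℝ] ℝ)) × ℝ | h e.1 ≤ e.2}) (w : X × (X →L[ℝ] ℝ)) :
    Convex ℝ {e : (X × (X →L[ℝ] ℝ)) × ℝ | transl h w e.1 ≤ e.2} := by
  rintro ⟨p, t⟩ hp ⟨p', t'⟩ hp' a b ha hb hab
  rw [mem_ofPred_eq, transl_le_iff] at hp hp' ⊢
  have key := hh (x := (p + w, _)) hp (y := (p' + w, _)) hp' ha hb hab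
  rw [mem_ofPred_eq] at key
  convert key using 2
  · show a • p + b • p' + w = a • (p + w) + b • (p' + w)
    rw [smul_add, smul_add, add_add_add_comm, ← add_smul, hab, one_smul]
  · simp only [Prod.smul_mk, Prod.mk_add_mk, smul_eq_mul, Prod.fst_add, Prod.snd_add,
      Prod.smul_fst, Prod.smul_snd, map_add, map_smul, add_apply, smul_apply]
    linear_combination (-w.2 w.1) * hab

theorem conj_transl (h : X × (X →L[ℝ] ℝ) → EReal) (w : X × (X →L[ℝ] ℝ)) :
    conj (transl h w) = translD (conj h) (w.2, inclusionInDoubleDual ℝ X w.1) := by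
  ext q
  rw [conj, translD, conj, ← EReal.iSup_sub_coe]
  refine (Equiv.addRight w).iSup_congr fun p => ?_
  rw [transl, EReal.coe_sub_sub_coe, ← EReal.coe_sub_sub_comm]
  congr 2
  simp only [Equiv.coe_addRight, Prod.fst_add, Prod.snd_add, map_add, add_apply, dual_def]
  ring

end Translation

theorem ConvexE.convex_epigraph {X : Type*} [NormedAddCommGroup X] [NormedSpace ℝ X]
    {h : X × (X →L[ℝ] ℝ) → EReal} (hconv : ConvexE h) :
    Convex ℝ {e : (X × (X →L[ℝ] ℝ)) × ℝ | h e.1 ≤ e.2} := by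
  rintro ⟨p, t⟩ hp ⟨p', t'⟩ hp' a b ha hb hab
  refine (hconv p p' a b ha hb hab).trans ?_
  calc (a : EReal) * h p + (b : EReal) * h p'
      ≤ (a : EReal) * t + (b : EReal) * t' :=
        add_le_add (mul_le_mul_of_nonneg_left hp (EReal.coe_nonneg.2 ha))
          (mul_le_mul_of_nonneg_left hp' (EReal.coe_nonneg.2 hb))
    _ = ((a * t + b * t' : ℝ) : EReal) := by norm_cast

section Core

variable {X : Type*} [NormedAddCommGroup X] [NormedSpace ℝ X]
  {φ : X × (X →L[ℝ] ℝ) → EReal}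

theorem le_zero_of_coe_le_add_half_sq_norm
    (hφ : Convex ℝ {e : (X × (X →L[ℝ] ℝ)) × ℝ | φ e.1 ≤ e.2})
    (hpistar : ∀ q : (X →L[ℝ] ℝ) × ((X →L[ℝ] ℝ) →L[ℝ] ℝ), (q.2 q.1 : EReal) ≤ conj φ q)
    {l : ℝ} (hl : ∀ p, (l : EReal) ≤ φ p + ((‖p.1‖ ^ 2 / 2 + ‖p.2‖ ^ 2 / 2 : ℝ) : EReal)) :
    l ≤ 0 := by
  have hne : {e : (X × (X →L[ℝ] ℝ)) × ℝ | φ e.1 ≤ e.2}.Nonempty := by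
    obtain ⟨p, hp⟩ : ∃ p, φ p ≠ ⊤ := by
      by_contra! htop
      simpa [conj, htop] using hpistar 0
    exact ⟨(p, (φ p).toReal), EReal.le_coe_toReal hp⟩
  obtain ⟨r, c, hrφ, hrN⟩ := exists_separating_functional_of_le_add hφ hne
    convexOn_univ_half_sq_norm_add (by fun_prop) fun e he => by
      exact_mod_cast (hl e.1).trans (add_le_add_left he _)
  set q₁ := r.comp (ContinuousLinearMap.inl ℝ X (X →L[ℝ] ℝ))
  set q₂ := r.comp (ContinuousLinearMap.inr ℝ X (X →L[ℝ] ℝ))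
  have hr : ∀ p, r p = q₁ p.1 + q₂ p.2 := fun p => (r.comp_inl_add_comp_inr p).symm
  have hconj : conj φ (-q₁, -q₂) ≤ c := iSup_le fun p =>
    EReal.coe_sub_le_of_forall_le fun t ht => by
      have := hrφ (p, t) ht
      rw [hr] at this
      simp only [neg_apply]
      linarith
  have hpair : q₂ q₁ ≤ c := by
    have := (hpistar (-q₁, -q₂)).trans hconj
    simp only [neg_apply, map_neg, neg_neg] at this
    exact_mod_cast this
  have hquad : ∀ x, q₁ x - ‖x‖ ^ 2 / 2 ≤ ‖q₁‖ ^ 2 / 2 - l := fun x => by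
    have := hrN (x, -q₁)
    simp only [hr, map_neg, norm_neg] at this
    linarith
  linarith [q₁.half_sq_opNorm_le_of_forall_apply_sub_le hquad]

theorem iInf_add_half_sq_norm_eq_zero
    (hφ : Convex ℝ {e : (X × (X →L[ℝ] ℝ)) × ℝ | φ e.1 ≤ e.2})
    (hpi : ∀ p : X × (X →L[ℝ] ℝ), (p.2 p.1 : EReal) ≤ φ p)
    (hpistar : ∀ q : (X →L[ℝ] ℝ) × ((X →L[ℝ] ℝ) →L[ℝ] ℝ), (q.2 q.1 : EReal) ≤ conj φ q) :
    ⨅ p : X × (X →L[ℝ] ℝ), (φ p + ((‖p.1‖ ^ 2 / 2 + ‖p.2‖ ^ 2 / 2 : ℝ) : EReal)) = 0 := by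
  refine le_antisymm ?_ (le_iInf fun p => ?_)
  · by_contra! hpos
    obtain ⟨l, hl₀, hl⟩ := EReal.lt_iff_exists_real_btwn.1 hpos
    exact (EReal.coe_pos.1 hl₀).not_ge
      (le_zero_of_coe_le_add_half_sq_norm hφ hpistar fun p => (le_iInf_iff.1 hl.le) p)
  · calc (0 : EReal) ≤ ((p.2 p.1 + (‖p.1‖ ^ 2 / 2 + ‖p.2‖ ^ 2 / 2) : ℝ) : EReal) := by
          exact_mod_cast by linarith [p.2.neg_apply_le_half_sq_norm_add p.1]
      _ ≤ φ p + ((‖p.1‖ ^ 2 / 2 + ‖p.2‖ ^ 2 / 2 : ℝ) : EReal) := by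
          rw [EReal.coe_add]
          exact add_le_add_left (hpi p) _

end Core

theorem stmt_3_general {X : Type*} [NormedAddCommGroup X] [NormedSpace ℝ X]
    (h : X × (X →L[ℝ] ℝ) → EReal) (hconv : ConvexE h)
    (hpi : ∀ p : X × (X →L[ℝ] ℝ), (p.2 p.1 : EReal) ≤ h p)
    (hpistar : ∀ q : (X →L[ℝ] ℝ) × ((X →L[ℝ] ℝ) →L[ℝ] ℝ), (q.2 q.1 : EReal) ≤ conj h q) :
    AuxCond h := fun w =>
  iInf_add_half_sq_norm_eq_zero (convex_epigraph_transl hconv.convex_epigraph w)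
    (le_transl hpi w) fun q => by
      rw [conj_transl]
      exact le_transl (X := X →L[ℝ] ℝ) hpistar _ q

theorem stmt_3 {X : Type*} [NormedAddCommGroup X] [NormedSpace ℝ X] [CompleteSpace X]
    (h : X × (X →L[ℝ] ℝ) → EReal) (hbot : ∀ p, h p ≠ ⊥) (hconv : ConvexE h)
    (hlsc : LowerSemicontinuous h)
    (hpi : ∀ p : X × (X →L[ℝ] ℝ), (p.2 p.1 : EReal) ≤ h p)
    (hpistar : ∀ q : (X →L[ℝ] ℝ) × ((X →L[ℝ] ℝ) →L[ℝ] ℝ), (q.2 q.1 : EReal) ≤ conj h q) :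
    AuxCond h :=
  stmt_3_general h hconv hpi hpistar
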